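/- Let p, p₁, q, q₁ be continuous on [a, b] with p ≥ p₁ > 0 and q₁ > q on [a, b]. Let x and y be nontrivial solutions of (p x')' + q x = 0 and (p₁ y')' + q₁ y = 0 respectively, with x(a) = 0. Suppose c ∈ (a, b] satisfies x(c) ≠ 0, y(c) ≠ 0, and x and y have the same number of zeros in (a, c). Then p(c)·x'(c)/x(c) ≥ p₁(c)·y'(c)/y(c). -/

import Mathlib

/-!
Picone's identity: where `y ≠ 0`, the function
`F = (x / y) (y p x' - x p₁ y') = x² (p x'/x - p₁ y'/y)` has derivative
`F' = (q₁ - q) x² + (p - p₁) x'² + p₁ (x' - x y'/y)²`, positive wherever `x ≠ 0`, and `F → 0` at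
every zero of `x` (also at a common zero, as zeros of nontrivial solutions are simple). Hence `y`
vanishes strictly between consecutive zeros of `x`. If `y` also vanished after the last zero `d`
of `x` in `[a, c)`, it would have more zeros in `(a, c)` than `x`, which vanishes at `a`. So
`y ≠ 0` on `(d, c]`, where `F` increases from `0`, and `F c > 0` is the claim.
-/

open Set Filter Topology

theorem HasDerivAt.eq_zero_of_frequently_eq_zero {f : ℝ → ℝ} {f' t₀ : ℝ} (hf : HasDerivAt f f' t₀)
    (h : ∃ᶠ t in 𝓝[≠] t₀, f t = 0) : f t₀ = 0 ∧ f' = 0 := by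
  have hval : f t₀ = 0 := tendsto_nhds_unique_of_frequently_eq
    (hf.continuousAt.tendsto.mono_left nhdsWithin_le_nhds) tendsto_const_nhds h
  refine ⟨hval, tendsto_nhds_unique_of_frequently_eq (hasDerivAt_iff_tendsto_slope.mp hf)
    tendsto_const_nhds (h.mono fun t ht => ?_)⟩
  simp [slope_def_field, ht, hval]

theorem StrictMonoOn.lt_of_tendsto_nhdsGT {f : ℝ → ℝ} {d e L t : ℝ}
    (hf : StrictMonoOn f (Ioo d e)) (hlim : Tendsto f (𝓝[>] d) (𝓝 L)) (ht : t ∈ Ioo d e) :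
    L < f t := by
  obtain ⟨m, hdm, hmt⟩ := exists_between ht.1
  have hm : m ∈ Ioo d e := ⟨hdm, hmt.trans ht.2⟩
  calc L ≤ f m := le_of_tendsto hlim <| by
        filter_upwards [Ioo_mem_nhdsGT hdm] with s hs
        exact (hf ⟨hs.1, hs.2.trans hm.2⟩ hm hs.2).le
    _ < f t := hf hm ht hmt

theorem StrictMonoOn.lt_of_tendsto_nhdsLT {f : ℝ → ℝ} {d e L t : ℝ}
    (hf : StrictMonoOn f (Ioo d e)) (hlim : Tendsto f (𝓝[<] e) (𝓝 L)) (ht : t ∈ Ioo d e) :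
    f t < L := by
  obtain ⟨m, htm, hme⟩ := exists_between ht.2
  have hm : m ∈ Ioo d e := ⟨ht.1.trans htm, hme⟩
  calc f t < f m := hf ht hm htm
    _ ≤ L := ge_of_tendsto hlim <| by
        filter_upwards [Ioo_mem_nhdsLT hme] with s hs
        exact (hf hm ⟨ht.1.trans (htm.trans hs.1), hs.2⟩ hs.1).le

theorem Set.ncard_le_ncard_of_interlace {α : Type*} [LinearOrder α] {S T : Set α} {c : α}
    (hS : S.Finite) (hT : T.Finite) (hSc : ∀ s ∈ S, s < c)
    (h : ∀ s ∈ S, ∀ e ∈ insert c S, s < e → (∀ r ∈ Ioo s e, r ∉ S) → ∃ z ∈ T, z ∈ Ioo s e) :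
    S.ncard ≤ T.ncard := by
  have hnext : ∀ s ∈ S, ∃ z ∈ T, s < z ∧ ∀ s' ∈ S, s < s' → z < s' := by
    intro s hs
    obtain ⟨e, ⟨he, hse⟩, hmin⟩ := Set.exists_min_image {r | r ∈ insert c S ∧ s < r} id
      ((hS.insert c).subset fun _ hr => hr.1) ⟨c, mem_insert c S, hSc s hs⟩
    obtain ⟨z, hzT, hsz, hze⟩ := h s hs e he hse fun r hr hrS =>
      (hmin r ⟨mem_insert_of_mem c hrS, hr.1⟩).not_gt hr.2
    exact ⟨z, hzT, hsz, fun s' hs' hss' => hze.trans_le (hmin s' ⟨mem_insert_of_mem c hs', hss'⟩)⟩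
  choose! ψ hψT hψgt hψlt using hnext
  have hψ : StrictMonoOn ψ S := fun s hs s' hs' hss' =>
    (hψlt s hs s' hs' hss').trans (hψgt s' hs')
  calc S.ncard = (ψ '' S).ncard := (hψ.injOn.ncard_image).symm
    _ ≤ T.ncard := ncard_le_ncard (image_subset_iff.2 hψT) hT

theorem Set.ncard_sep_Ico_eq_add_one {α : Type*} [LinearOrder α] {P : α → Prop} {a c : α}
    (hac : a < c) (ha : P a) (hfin : {t | t ∈ Ico a c ∧ P t}.Finite) :
    {t | t ∈ Ico a c ∧ P t}.ncard = {t | t ∈ Ioo a c ∧ P t}.ncard + 1 := by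
  have hinsert : {t | t ∈ Ico a c ∧ P t} = insert a {t | t ∈ Ioo a c ∧ P t} := by
    ext t
    rw [mem_ofPred_eq, ← Ioo_insert_left hac]
    constructor
    · rintro ⟨rfl | ht, hPt⟩
      exacts [mem_insert _ _, mem_insert_of_mem _ ⟨ht, hPt⟩]
    · rintro (rfl | ⟨ht, hPt⟩)
      exacts [⟨mem_insert _ _, ha⟩, ⟨mem_insert_of_mem _ ht, hPt⟩]
  rw [hinsert] at hfin ⊢
  exact ncard_insert_of_notMem (fun h => h.1.1.false) (hfin.subset (subset_insert _ _))

theorem exists_last_zero {f : ℝ → ℝ} {a c : ℝ} (hZ : {t | t ∈ Ico a c ∧ f t = 0}.Finite)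
    (hac : a < c) (ha : f a = 0) (hc : f c ≠ 0) :
    ∃ d ∈ Ico a c, f d = 0 ∧ ∀ t ∈ Ioc d c, f t ≠ 0 := by
  obtain ⟨d, ⟨hd, hfd⟩, hmax⟩ := Set.exists_max_image _ id hZ ⟨a, left_mem_Ico.2 hac, ha⟩
  refine ⟨d, hd, hfd, fun t ht hft => ?_⟩
  rcases ht.2.lt_or_eq with htc | rfl
  · exact (hmax t ⟨⟨hd.1.trans ht.1.le, htc⟩, hft⟩).not_gt ht.1
  · exact hc hft

structure IsSturmLiouvilleSolution (s : Set ℝ) (p q x x' : ℝ → ℝ) : Prop where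
  hasDerivAt : ∀ t ∈ s, HasDerivAt x (x' t) t
  hasDerivAt_flux : ∀ t ∈ s, HasDerivAt (fun r => p r * x' r) (-(q t * x t)) t

namespace IsSturmLiouvilleSolution

variable {s : Set ℝ} {a b : ℝ} {p q x x' : ℝ → ℝ}

theorem mono {s' : Set ℝ} (h : IsSturmLiouvilleSolution s p q x x') (hs' : s' ⊆ s) :
    IsSturmLiouvilleSolution s' p q x x' :=
  ⟨fun t ht => h.hasDerivAt t (hs' ht), fun t ht => h.hasDerivAt_flux t (hs' ht)⟩

theorem continuousOn (h : IsSturmLiouvilleSolution s p q x x') : ContinuousOn x s :=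
  fun t ht => (h.hasDerivAt t ht).continuousAt.continuousWithinAt

theorem continuousOn_flux (h : IsSturmLiouvilleSolution s p q x x') :
    ContinuousOn (fun r => p r * x' r) s :=
  fun t ht => (h.hasDerivAt_flux t ht).continuousAt.continuousWithinAt

/-- In the phase variables `(x, p x')` the equation is a linear system whose coefficients are
bounded on `[a, b]`, so uniqueness for Lipschitz ODEs applies. -/
theorem eqOn_zero (h : IsSturmLiouvilleSolution (Icc a b) p q x x')
    (hp : ContinuousOn p (Icc a b)) (hp_pos : ∀ t ∈ Icc a b, 0 < p t)
    (hq : ContinuousOn q (Icc a b)) {t₀ : ℝ} (ht₀ : t₀ ∈ Icc a b)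
    (hx : x t₀ = 0) (hx' : x' t₀ = 0) : EqOn x 0 (Icc a b) := by
  obtain ⟨C, hC⟩ := isCompact_Icc.exists_bound_of_continuousOn
    ((hp.inv₀ fun t ht => (hp_pos t ht).ne').prodMk hq)
  set v : ℝ → ℝ × ℝ → ℝ × ℝ := fun t w => ((p t)⁻¹ • w.2, (-q t) • w.1)
  have hv : ∀ t ∈ Icc a b, LipschitzOnWith C.toNNReal (v t) univ := by
    intro t ht
    have hCt := hC t ht
    rw [Prod.norm_def, max_le_iff] at hCt
    refine (((lipschitzWith_smul _).comp LipschitzWith.prod_snd).prodMk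
      ((lipschitzWith_smul _).comp LipschitzWith.prod_fst)).weaken ?_ |>.lipschitzOnWith
    rw [mul_one, mul_one, nnnorm_neg, max_le_iff, ← NNReal.coe_le_coe, ← NNReal.coe_le_coe,
      Real.coe_toNNReal _ ((norm_nonneg _).trans hCt.1)]
    exact hCt
  set f : ℝ → ℝ × ℝ := fun t => (x t, p t * x' t)
  have hf : ∀ t ∈ Icc a b, HasDerivAt f (v t (f t)) t := by
    intro t ht
    convert (h.hasDerivAt t ht).prodMk (h.hasDerivAt_flux t ht) using 1
    simp [v, f, (hp_pos t ht).ne']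
  have hfc : ContinuousOn f (Icc a b) := h.continuousOn.prodMk h.continuousOn_flux
  have h0 : ∀ t, HasDerivAt (fun _ => 0) (v t 0) t := fun t => by
    rw [show v t 0 = 0 by simp [v]]
    exact hasDerivAt_const t _
  have hft₀ : f t₀ = 0 := by simp [f, hx, hx']
  have hleft : EqOn f (fun _ => 0) (Icc a t₀) :=
    ODE_solution_unique_of_mem_Icc_left (s := fun _ => univ)
      (fun t ht => hv t ⟨ht.1.le, ht.2.trans ht₀.2⟩) (hfc.mono (Icc_subset_Icc_right ht₀.2))
      (fun t ht => (hf t ⟨ht.1.le, ht.2.trans ht₀.2⟩).hasDerivWithinAt) (fun _ _ => trivial)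
      continuousOn_const (fun t _ => (h0 t).hasDerivWithinAt) (fun _ _ => trivial) hft₀
  have hright : EqOn f (fun _ => 0) (Icc t₀ b) :=
    ODE_solution_unique_of_mem_Icc_right (s := fun _ => univ)
      (fun t ht => hv t ⟨ht₀.1.trans ht.1, ht.2.le⟩) (hfc.mono (Icc_subset_Icc_left ht₀.1))
      (fun t ht => (hf t ⟨ht₀.1.trans ht.1, ht.2.le⟩).hasDerivWithinAt) (fun _ _ => trivial)
      continuousOn_const (fun t _ => (h0 t).hasDerivWithinAt) (fun _ _ => trivial) hft₀
  intro t ht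
  rcases le_total t t₀ with htt₀ | htt₀
  · exact congrArg Prod.fst (hleft ⟨ht.1, htt₀⟩)
  · exact congrArg Prod.fst (hright ⟨htt₀, ht.2⟩)

theorem deriv_ne_zero_of_eq_zero (h : IsSturmLiouvilleSolution (Icc a b) p q x x')
    (hp : ContinuousOn p (Icc a b)) (hp_pos : ∀ t ∈ Icc a b, 0 < p t)
    (hq : ContinuousOn q (Icc a b)) (hnt : ∃ t ∈ Icc a b, x t ≠ 0) :
    ∀ t ∈ Icc a b, x t = 0 → x' t ≠ 0 := fun _ ht₀ hx hx' =>
  let ⟨_, hs, hxs⟩ := hnt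
  hxs (h.eqOn_zero hp hp_pos hq ht₀ hx hx' hs)

theorem finite_zeros (h : IsSturmLiouvilleSolution (Icc a b) p q x x')
    (hp : ContinuousOn p (Icc a b)) (hp_pos : ∀ t ∈ Icc a b, 0 < p t)
    (hq : ContinuousOn q (Icc a b)) (hnt : ∃ t ∈ Icc a b, x t ≠ 0) :
    {t | t ∈ Icc a b ∧ x t = 0}.Finite := by
  by_contra hinf
  obtain ⟨t₀, ht₀, hacc⟩ :=
    Set.Infinite.exists_accPt_of_subset_isCompact hinf isCompact_Icc fun _ ht => ht.1
  rw [accPt_iff_frequently_nhdsNE] at hacc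
  obtain ⟨hx, hx'⟩ :=
    (h.hasDerivAt t₀ ht₀).eq_zero_of_frequently_eq_zero (hacc.mono fun _ ht => ht.2)
  exact h.deriv_ne_zero_of_eq_zero hp hp_pos hq hnt t₀ ht₀ hx hx'

end IsSturmLiouvilleSolution

structure IsSturmMajorant (s : Set ℝ) (p q p₁ q₁ : ℝ → ℝ) : Prop where
  le : ∀ t ∈ s, p₁ t ≤ p t
  pos : ∀ t ∈ s, 0 < p₁ t
  lt : ∀ t ∈ s, q t < q₁ t

theorem IsSturmMajorant.mono {s s' : Set ℝ} {p q p₁ q₁ : ℝ → ℝ}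
    (h : IsSturmMajorant s p q p₁ q₁) (hs' : s' ⊆ s) : IsSturmMajorant s' p q p₁ q₁ :=
  ⟨fun t ht => h.le t (hs' ht), fun t ht => h.pos t (hs' ht), fun t ht => h.lt t (hs' ht)⟩

noncomputable def piconeFun (p p₁ x x' y y' : ℝ → ℝ) (t : ℝ) : ℝ :=
  x t * (y t * (p t * x' t) - x t * (p₁ t * y' t)) / y t

section Picone

variable {p p₁ q q₁ x x' y y' : ℝ → ℝ}

theorem piconeFun_eq {t : ℝ} (hx : x t ≠ 0) (hy : y t ≠ 0) :
    piconeFun p p₁ x x' y y' t = x t ^ 2 * (p t * x' t / x t - p₁ t * y' t / y t) := by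
  unfold piconeFun
  field_simp

theorem hasDerivAt_piconeFun {t : ℝ} (hx : HasDerivAt x (x' t) t)
    (hpx : HasDerivAt (fun r => p r * x' r) (-(q t * x t)) t) (hy : HasDerivAt y (y' t) t)
    (hpy : HasDerivAt (fun r => p₁ r * y' r) (-(q₁ t * y t)) t) (hyt : y t ≠ 0) :
    HasDerivAt (piconeFun p p₁ x x' y y')
      ((q₁ t - q t) * x t ^ 2 + (p t - p₁ t) * x' t ^ 2 + p₁ t * (x' t - y' t / y t * x t) ^ 2)
      t := by
  have h : HasDerivAt (fun r => x r * (y r * (p r * x' r) - x r * (p₁ r * y' r)) / y r)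
      (((x' t * (y t * (p t * x' t) - x t * (p₁ t * y' t))
        + x t * ((y' t * (p t * x' t) + y t * -(q t * x t))
          - (x' t * (p₁ t * y' t) + x t * -(q₁ t * y t)))) * y t
        - x t * (y t * (p t * x' t) - x t * (p₁ t * y' t)) * y' t) / y t ^ 2) t :=
    (hx.mul ((hy.mul hpx).sub (hx.mul hpy))).div hy hyt
  refine h.congr_deriv ?_
  field_simp
  ring

theorem strictMonoOn_piconeFun {D : Set ℝ} (hD : Convex ℝ D)
    (hx : IsSturmLiouvilleSolution D p q x x') (hy : IsSturmLiouvilleSolution D p₁ q₁ y y')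
    (hmaj : IsSturmMajorant D p q p₁ q₁) (hyD : ∀ t ∈ D, y t ≠ 0)
    (hxD : ∀ t ∈ interior D, x t ≠ 0) :
    StrictMonoOn (piconeFun p p₁ x x' y y') D := by
  have hderiv : ∀ t ∈ D, HasDerivAt (piconeFun p p₁ x x' y y') _ t := fun t ht =>
    hasDerivAt_piconeFun (hx.hasDerivAt t ht) (hx.hasDerivAt_flux t ht) (hy.hasDerivAt t ht)
      (hy.hasDerivAt_flux t ht) (hyD t ht)
  refine strictMonoOn_of_deriv_pos hD
    (fun t ht => (hderiv t ht).continuousAt.continuousWithinAt) fun t ht => ?_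
  have htD := interior_subset ht
  rw [(hderiv t htD).deriv]
  have hq := mul_pos (sub_pos.2 (hmaj.lt t htD)) (pow_two_pos_of_ne_zero (hxD t ht))
  have hp := mul_nonneg (sub_nonneg.2 (hmaj.le t htD)) (sq_nonneg (x' t))
  have hp₁ := mul_nonneg (hmaj.pos t htD).le (sq_nonneg (x' t - y' t / y t * x t))
  linarith

theorem tendsto_piconeFun_zero {S : Set ℝ} {t₀ : ℝ} (hx : HasDerivAt x (x' t₀) t₀)
    (hpx : ContinuousAt (fun r => p r * x' r) t₀) (hy : HasDerivAt y (y' t₀) t₀)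
    (hpy : ContinuousAt (fun r => p₁ r * y' r) t₀) (hxt₀ : x t₀ = 0)
    (hyt₀ : y t₀ = 0 → y' t₀ ≠ 0) (hyS : ∀ t ∈ S, y t ≠ 0) (ht₀S : t₀ ∉ S) :
    Tendsto (piconeFun p p₁ x x' y y') (𝓝[S] t₀) (𝓝 0) := by
  have hSne : 𝓝[S] t₀ ≤ 𝓝[≠] t₀ :=
    nhdsWithin_mono t₀ fun t ht (htt₀ : t = t₀) => ht₀S (htt₀ ▸ ht)
  have hx0 : Tendsto x (𝓝[S] t₀) (𝓝 0) :=
    hxt₀ ▸ hx.continuousAt.tendsto.mono_left nhdsWithin_le_nhds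
  -- `F = x (p x') - (p₁ y') x (x / y)`, and `x / y` converges (to `x' t₀ / y' t₀` if `y t₀ = 0`).
  obtain ⟨L, hL⟩ : ∃ L, Tendsto (fun t => x t / y t) (𝓝[S] t₀) (𝓝 L) := by
    by_cases hy0 : y t₀ = 0
    · refine ⟨x' t₀ / y' t₀, (((hasDerivAt_iff_tendsto_slope.mp hx).div
        (hasDerivAt_iff_tendsto_slope.mp hy) (hyt₀ hy0)).mono_left hSne).congr' ?_⟩
      filter_upwards [self_mem_nhdsWithin] with t ht
      have htt₀ : t - t₀ ≠ 0 := sub_ne_zero.2 fun h => ht₀S (h ▸ ht)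
      simp only [Pi.div_apply, slope_def_field, hxt₀, hy0, sub_zero]
      exact div_div_div_cancel_right₀ htt₀ _ _
    · exact ⟨0 / y t₀, hx0.div (hy.continuousAt.tendsto.mono_left nhdsWithin_le_nhds) hy0⟩
  have h := (hx0.mul (hpx.tendsto.mono_left nhdsWithin_le_nhds)).sub
    ((hpy.tendsto.mono_left nhdsWithin_le_nhds).mul (hx0.mul hL))
  simp only [zero_mul, mul_zero, sub_zero] at h
  refine h.congr' ?_
  filter_upwards [self_mem_nhdsWithin] with t ht
  have := hyS t ht
  unfold piconeFun
  field_simp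

end Picone

section Sturm

variable {p p₁ q q₁ x x' y y' : ℝ → ℝ} {d e : ℝ}

theorem tendsto_piconeFun_nhdsWithin_Ioo (hde : d < e)
    (hx : IsSturmLiouvilleSolution (Icc d e) p q x x')
    (hy : IsSturmLiouvilleSolution (Icc d e) p₁ q₁ y y') (hyne : ∀ t ∈ Ioo d e, y t ≠ 0)
    {t₀ : ℝ} (ht₀ : t₀ = d ∨ t₀ = e) (hxt₀ : x t₀ = 0) (hyt₀ : y t₀ = 0 → y' t₀ ≠ 0) :
    Tendsto (piconeFun p p₁ x x' y y') (𝓝[Ioo d e] t₀) (𝓝 0) := by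
  have ht₀' : t₀ ∈ Icc d e := by rcases ht₀ with rfl | rfl <;> simp [hde.le]
  exact tendsto_piconeFun_zero (hx.hasDerivAt t₀ ht₀') (hx.hasDerivAt_flux t₀ ht₀').continuousAt
    (hy.hasDerivAt t₀ ht₀') (hy.hasDerivAt_flux t₀ ht₀').continuousAt hxt₀ hyt₀ hyne
    (by rcases ht₀ with rfl | rfl <;> simp)

theorem exists_zero_of_sturm_comparison (hde : d < e)
    (hx : IsSturmLiouvilleSolution (Icc d e) p q x x')
    (hy : IsSturmLiouvilleSolution (Icc d e) p₁ q₁ y y')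
    (hmaj : IsSturmMajorant (Ioo d e) p q p₁ q₁)
    (hxd : x d = 0) (hxe : x e = 0) (hxne : ∀ t ∈ Ioo d e, x t ≠ 0)
    (hyd : y d = 0 → y' d ≠ 0) (hye : y e = 0 → y' e ≠ 0) :
    ∃ z ∈ Ioo d e, y z = 0 := by
  by_contra! hyne
  have hmono := strictMonoOn_piconeFun (convex_Ioo d e) (hx.mono Ioo_subset_Icc_self)
    (hy.mono Ioo_subset_Icc_self) hmaj hyne (by rwa [interior_Ioo])
  have hmid : (d + e) / 2 ∈ Ioo d e := ⟨by linarith, by linarith⟩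
  have hpos := hmono.lt_of_tendsto_nhdsGT (by
    simpa only [nhdsWithin_Ioo_eq_nhdsGT hde] using
      tendsto_piconeFun_nhdsWithin_Ioo hde hx hy hyne (Or.inl rfl) hxd hyd) hmid
  have hneg := hmono.lt_of_tendsto_nhdsLT (by
    simpa only [nhdsWithin_Ioo_eq_nhdsLT hde] using
      tendsto_piconeFun_nhdsWithin_Ioo hde hx hy hyne (Or.inr rfl) hxe hye) hmid
  exact hpos.asymm hneg

theorem piconeFun_pos (hde : d < e)
    (hx : IsSturmLiouvilleSolution (Icc d e) p q x x')
    (hy : IsSturmLiouvilleSolution (Icc d e) p₁ q₁ y y')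
    (hmaj : IsSturmMajorant (Ioc d e) p q p₁ q₁)
    (hxd : x d = 0) (hxne : ∀ t ∈ Ioc d e, x t ≠ 0) (hyne : ∀ t ∈ Ioc d e, y t ≠ 0)
    (hyd : y d = 0 → y' d ≠ 0) :
    0 < piconeFun p p₁ x x' y y' e := by
  have hmono := strictMonoOn_piconeFun (convex_Ioc d e) (hx.mono Ioc_subset_Icc_self)
    (hy.mono Ioc_subset_Icc_self) hmaj hyne
    (by rw [interior_Ioc]; exact fun t ht => hxne t (Ioo_subset_Ioc_self ht))
  have hmid : (d + e) / 2 ∈ Ioo d e := ⟨by linarith, by linarith⟩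
  have hpos := (hmono.mono Ioo_subset_Ioc_self).lt_of_tendsto_nhdsGT (by
    simpa only [nhdsWithin_Ioo_eq_nhdsGT hde] using
      tendsto_piconeFun_nhdsWithin_Ioo hde hx hy (fun t ht => hyne t (Ioo_subset_Ioc_self ht))
        (Or.inl rfl) hxd hyd) hmid
  exact hpos.trans (hmono (Ioo_subset_Ioc_self hmid) (right_mem_Ioc.2 hde) hmid.2)

theorem ncard_zeros_lt_of_sturm_comparison {a c : ℝ} (hac : a < c)
    (hx : IsSturmLiouvilleSolution (Icc a c) p q x x')
    (hy : IsSturmLiouvilleSolution (Icc a c) p₁ q₁ y y')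
    (hmaj : IsSturmMajorant (Icc a c) p q p₁ q₁)
    (hy' : ∀ t ∈ Icc a c, y t = 0 → y' t ≠ 0)
    (hZx : {t | t ∈ Ico a c ∧ x t = 0}.Finite) (hZy : {t | t ∈ Ioo a c ∧ y t = 0}.Finite)
    (hxa : x a = 0) (hlast : ∀ s ∈ Ico a c, x s = 0 → ∃ z ∈ Ioo s c, y z = 0) :
    {t | t ∈ Ioo a c ∧ x t = 0}.ncard < {t | t ∈ Ioo a c ∧ y t = 0}.ncard := by
  rw [← Nat.add_one_le_iff, ← Set.ncard_sep_Ico_eq_add_one hac hxa hZx]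
  refine Set.ncard_le_ncard_of_interlace hZx hZy (fun s hs => hs.1.2) ?_
  rintro s ⟨⟨has, hsc⟩, hxs⟩ e he hse hgap
  have hec : e ≤ c := by
    rcases he with rfl | he
    exacts [le_rfl, he.1.2.le]
  obtain ⟨z, hz, hyz⟩ : ∃ z ∈ Ioo s e, y z = 0 := by
    rcases he with rfl | ⟨-, hxe⟩
    · exact hlast s ⟨has, hsc⟩ hxs
    have hsub : Icc s e ⊆ Icc a c := Icc_subset_Icc has hec
    exact exists_zero_of_sturm_comparison hse (hx.mono hsub) (hy.mono hsub)
      (hmaj.mono (Ioo_subset_Icc_self.trans hsub)) hxs hxe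
      (fun r hr hxr => hgap r hr ⟨⟨has.trans hr.1.le, hr.2.trans_le hec⟩, hxr⟩)
      (hy' s (hsub (left_mem_Icc.2 hse.le))) (hy' e (hsub (right_mem_Icc.2 hse.le)))
  exact ⟨z, ⟨⟨has.trans_lt hz.1, hz.2.trans_le hec⟩, hyz⟩, hz⟩

end Sturm

theorem stmt4_general (a b : ℝ)
    (p p₁ q q₁ x x' y y' : ℝ → ℝ)
    (hp_cont : ContinuousOn p (Icc a b)) (hp₁_cont : ContinuousOn p₁ (Icc a b))
    (hq_cont : ContinuousOn q (Icc a b)) (hq₁_cont : ContinuousOn q₁ (Icc a b))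
    (hpp₁ : ∀ t ∈ Icc a b, p₁ t ≤ p t) (hp₁_pos : ∀ t ∈ Icc a b, 0 < p₁ t)
    (hqq₁ : ∀ t ∈ Icc a b, q t < q₁ t)
    (hx : ∀ t ∈ Icc a b, HasDerivAt x (x' t) t)
    (hxode : ∀ t ∈ Icc a b, HasDerivAt (fun s => p s * x' s) (-(q t * x t)) t)
    (hy : ∀ t ∈ Icc a b, HasDerivAt y (y' t) t)
    (hyode : ∀ t ∈ Icc a b, HasDerivAt (fun s => p₁ s * y' s) (-(q₁ t * y t)) t)
    (hx_nontriv : ∃ t ∈ Icc a b, x t ≠ 0)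
    (hy_nontriv : ∃ t ∈ Icc a b, y t ≠ 0)
    (hxa : x a = 0)
    (c : ℝ) (hc : c ∈ Ioc a b) (hxc : x c ≠ 0) (hyc : y c ≠ 0)
    (hzeros : {t | t ∈ Ioo a c ∧ x t = 0}.ncard = {t | t ∈ Ioo a c ∧ y t = 0}.ncard) :
    p₁ c * y' c / y c ≤ p c * x' c / x c := by
  have hp_pos : ∀ t ∈ Icc a b, 0 < p t := fun t ht => (hp₁_pos t ht).trans_le (hpp₁ t ht)
  have solx : IsSturmLiouvilleSolution (Icc a b) p q x x' := ⟨hx, hxode⟩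
  have soly : IsSturmLiouvilleSolution (Icc a b) p₁ q₁ y y' := ⟨hy, hyode⟩
  have hmaj : IsSturmMajorant (Icc a b) p q p₁ q₁ := ⟨hpp₁, hp₁_pos, hqq₁⟩
  have hy' := soly.deriv_ne_zero_of_eq_zero hp₁_cont hp₁_pos hq₁_cont hy_nontriv
  have hac : Icc a c ⊆ Icc a b := Icc_subset_Icc_right hc.2
  have hZx := (solx.finite_zeros hp_cont hp_pos hq_cont hx_nontriv).subset
    (t := {t | t ∈ Ico a c ∧ x t = 0}) fun t ht => ⟨hac (Ico_subset_Icc_self ht.1), ht.2⟩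
  have hZy := (soly.finite_zeros hp₁_cont hp₁_pos hq₁_cont hy_nontriv).subset
    (t := {t | t ∈ Ioo a c ∧ y t = 0}) fun t ht => ⟨hac (Ioo_subset_Icc_self ht.1), ht.2⟩
  obtain ⟨d, ⟨had, hdc⟩, hxd, hxne⟩ := exists_last_zero hZx hc.1 hxa hxc
  have hyne : ∀ t ∈ Ioc d c, y t ≠ 0 := by
    intro t₀ ht₀ hyt₀
    have hlast : ∀ s ∈ Ico a c, x s = 0 → ∃ z ∈ Ioo s c, y z = 0 := fun s hs hxs =>
      have hsd : s ≤ d := not_lt.1 fun hds => hxne s ⟨hds, hs.2.le⟩ hxs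
      ⟨t₀, ⟨hsd.trans_lt ht₀.1, ht₀.2.lt_of_ne fun h => hyc (h ▸ hyt₀)⟩, hyt₀⟩
    exact (ncard_zeros_lt_of_sturm_comparison hc.1 (solx.mono hac) (soly.mono hac)
      (hmaj.mono hac) (fun t ht => hy' t (hac ht)) hZx hZy hxa hlast).ne hzeros
  have hdc' : Icc d c ⊆ Icc a b := fun t ht => hac ⟨had.trans ht.1, ht.2⟩
  have hF := piconeFun_pos hdc (solx.mono hdc') (soly.mono hdc')
    (hmaj.mono (Ioc_subset_Icc_self.trans hdc')) hxd hxne hyne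
    (hy' d (hdc' (left_mem_Icc.2 hdc.le)))
  rw [piconeFun_eq hxc hyc] at hF
  exact (sub_pos.1 (pos_of_mul_pos_right hF (sq_nonneg _))).le

/-- Comparison of logarithmic derivatives (Theorem 9): if `x`, `y` solve comparable
Sturm–Liouville equations on `[a,b]`, `x(a) = 0`, and `x`, `y` have the same number of
zeros in `(a, c)`, then `p(c) x'(c)/x(c) ≥ p₁(c) y'(c)/y(c)`. -/
theorem stmt4 (a b : ℝ) (hab : a < b)
    (p p₁ q q₁ x x' y y' : ℝ → ℝ)
    (hp_cont : ContinuousOn p (Icc a b)) (hp₁_cont : ContinuousOn p₁ (Icc a b))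
    (hq_cont : ContinuousOn q (Icc a b)) (hq₁_cont : ContinuousOn q₁ (Icc a b))
    (hpp₁ : ∀ t ∈ Icc a b, p₁ t ≤ p t) (hp₁_pos : ∀ t ∈ Icc a b, 0 < p₁ t)
    (hqq₁ : ∀ t ∈ Icc a b, q t < q₁ t)
    (hx : ∀ t ∈ Icc a b, HasDerivAt x (x' t) t)
    (hxode : ∀ t ∈ Icc a b, HasDerivAt (fun s => p s * x' s) (-(q t * x t)) t)
    (hy : ∀ t ∈ Icc a b, HasDerivAt y (y' t) t)
    (hyode : ∀ t ∈ Icc a b, HasDerivAt (fun s => p₁ s * y' s) (-(q₁ t * y t)) t)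
    (hx_nontriv : ∃ t ∈ Icc a b, x t ≠ 0)
    (hy_nontriv : ∃ t ∈ Icc a b, y t ≠ 0)
    (hxa : x a = 0)
    (c : ℝ) (hc : c ∈ Ioc a b) (hxc : x c ≠ 0) (hyc : y c ≠ 0)
    (hzeros : {t | t ∈ Ioo a c ∧ x t = 0}.ncard = {t | t ∈ Ioo a c ∧ y t = 0}.ncard) :
    p₁ c * y' c / y c ≤ p c * x' c / x c :=
  stmt4_general a b p p₁ q q₁ x x' y y' hp_cont hp₁_cont hq_cont hq₁_cont hpp₁ hp₁_pos hqq₁ hx hxode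
    hy hyode hx_nontriv hy_nontriv hxa c hc hxc hyc hzeros
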